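/- Erdős's trichotomy for integers with many divisors. Fix γ ∈ (0,1) and C_1 > 1, and let N be sufficiently large depending on γ and C_1. Let n ≤ N be a positive integer and suppose that τ̃(n) ≥ 2^s τ̃_γ(n) for some real s > 2/γ. Then at least one of the following holds: (i) n ∈ S_1, i.e. n is divisible by some prime power p^a with a ≥ 2 and p^a > (log N)^{C_1}; (ii) n ∈ S_2, i.e. ∏_{p^a ∥ n, p ≤ N^{1/(log log N)^3}} p^a ≥ N^{γ/ log log N}; (iii) there exists an integer i with log₂ s − 2 ≤ i ≤ 6 log log log N such that n has at least γ s (i + 3 − log₂ s)/100 distinct prime divisors in the interval [N^{1/2^{i+1}}, N^{1/2^i}] and n is not divisible by the square of any prime in this interval. -/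

import Mathlib

open MeasureTheory Finset Filter
open scoped Classical BigOperators

noncomputable section

namespace DivisorCorr

/-- Value of the `i`-th affine-linear form (with linear coefficients `A` and
constant terms `b`) at an integer point `n`. -/
def psiZ {d t : ℕ} (A : Fin t → Fin d → ℤ) (b : Fin t → ℤ) (i : Fin t) (n : Fin d → ℤ) : ℤ :=
  ∑ j, A i j * n j + b i

/-- Value of the `i`-th affine-linear form at a real point `x`. -/
def psiR {d t : ℕ} (A : Fin t → Fin d → ℤ) (b : Fin t → ℤ) (i : Fin t) (x : Fin d → ℝ) : ℝ :=
  ∑ j, (A i j : ℝ) * x j + (b i : ℝ)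

/-- Non-degeneracy conditions for a system of affine-linear forms: no form is constant,
no restriction of the system to a single variable is constant, and no two forms are
rational multiples of each other. -/
def IsSystem {d t : ℕ} (A : Fin t → Fin d → ℤ) (b : Fin t → ℤ) : Prop :=
  (∀ i, ∃ j, A i j ≠ 0) ∧ (∀ j, ∃ i, A i j ≠ 0) ∧
    ∀ i j : Fin t, i ≠ j →
      ¬∃ q r : ℤ, q ≠ 0 ∧ r ≠ 0 ∧ (∀ k, q * A i k = r * A j k) ∧ q * b i = r * b j

/-- All linear coefficients are bounded in absolute value by `L`. -/
def CoeffBound {d t : ℕ} (A : Fin t → Fin d → ℤ) (L : ℕ) : Prop :=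
  ∀ i j, |A i j| ≤ (L : ℤ)

/-- Any two distinct linear parts are linearly independent (over ℚ, equivalently over ℤ). -/
def PairwiseIndep {d t : ℕ} (A : Fin t → Fin d → ℤ) : Prop :=
  ∀ i j : Fin t, i ≠ j → ∀ q r : ℤ, (∀ k, q * A i k + r * A j k = 0) → q = 0 ∧ r = 0

/-- Local divisor density `α(d₁,…,d_t)`. -/
def alphaD {d t : ℕ} (A : Fin t → Fin d → ℤ) (b : Fin t → ℤ) (D : Fin t → ℕ) : ℝ :=
  (((Fintype.piFinset fun _ : Fin d => Finset.range ((univ : Finset (Fin t)).lcm D)).filter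
      fun n => ∀ i, (D i : ℤ) ∣ psiZ A b i fun j => (n j : ℤ)).card : ℝ) /
    ((((univ : Finset (Fin t)).lcm D : ℕ) : ℝ)) ^ d

/-- Local factor `β_p`. -/
def betaP {d t : ℕ} (A : Fin t → Fin d → ℤ) (b : Fin t → ℤ) (p : ℕ) : ℝ :=
  (1 - (p : ℝ)⁻¹) ^ t * ∑' a : Fin t → ℕ, alphaD A b fun i => p ^ a i

/-- The divisor function of an integer. -/
def tauZ (n : ℤ) : ℕ := n.natAbs.divisors.card

/-- The normalised divisor function `τ̃(n) = (log N)⁻¹ Σ_{d ∣ n} 1`. -/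
def tauTilde (N : ℕ) (n : ℤ) : ℝ := (Real.log N)⁻¹ * (tauZ n : ℝ)

/-- The truncated normalised divisor function
`τ̃_γ(n) = (γ log N)⁻¹ Σ_{d ∣ n, d ≤ N^γ} 1`. -/
def tauTildeG (N : ℕ) (γ : ℝ) (n : ℤ) : ℝ :=
  (γ * Real.log N)⁻¹ * (((n.natAbs.divisors.filter (fun e : ℕ => (e : ℝ) ≤ (N : ℝ) ^ γ)).card : ℕ) : ℝ)

/-- The integer points of `K` (assumed to lie in `[-N,N]^d`). -/
def pts (d N : ℕ) (K : Set (Fin d → ℝ)) : Finset (Fin d → ℤ) :=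
  (Fintype.piFinset fun _ : Fin d => Finset.Icc (-(N : ℤ)) (N : ℤ)).filter
    fun n => (fun j => (n j : ℝ)) ∈ K

/-- The integer points of `K` (assumed to lie in the box `∏_j [lo j, hi j]`). -/
def ptsBox {d : ℕ} (lo hi : Fin d → ℤ) (K : Set (Fin d → ℝ)) : Finset (Fin d → ℤ) :=
  (Fintype.piFinset fun j : Fin d => Finset.Icc (lo j) (hi j)).filter
    fun n => (fun j => (n j : ℝ)) ∈ K

/-- `K ⊆ [-N,N]^d`. -/
def InBox (d N : ℕ) (K : Set (Fin d → ℝ)) : Prop :=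
  ∀ x ∈ K, ∀ j, x j ∈ Set.Icc (-(N : ℝ)) (N : ℝ)

/-- `Ψ(K) ⊆ [1,N]^t`. -/
def MapsIn {d t : ℕ} (A : Fin t → Fin d → ℤ) (b : Fin t → ℤ) (N : ℕ)
    (K : Set (Fin d → ℝ)) : Prop :=
  ∀ x ∈ K, ∀ i, psiR A b i x ∈ Set.Icc (1 : ℝ) (N : ℝ)

/-- Two linear parts are linearly dependent modulo `p`. -/
def AffRelMod {d : ℕ} (p : ℕ) (u v : Fin d → ℤ) : Prop :=
  ∃ q r : ℤ, (¬(p : ℤ) ∣ q ∨ ¬(p : ℤ) ∣ r) ∧ ∀ k, (p : ℤ) ∣ (q * u k + r * v k)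

/-- `p` is an exceptional prime for the system with linear coefficients `A`. -/
def Exceptional {d t : ℕ} (A : Fin t → Fin d → ℤ) (p : ℕ) : Prop :=
  ∃ i j : Fin t, i ≠ j ∧ AffRelMod p (A i) (A j)

/-- `S₁`: integers divisible by a proper prime power `p^a > (log N)^{C₁}`. -/
def S1set (N : ℕ) (C₁ : ℝ) : Set ℤ :=
  {m | ∃ p a : ℕ, p.Prime ∧ 2 ≤ a ∧ Real.log N ^ C₁ < (p : ℝ) ^ a ∧ (p : ℤ) ^ a ∣ m}

/-- The `X`-smooth part `∏_{p^a ∥ n, p ≤ X} p^a` of `n`. -/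
def smoothPart (n : ℕ) (X : ℝ) : ℕ :=
  ∏ p ∈ (n.primeFactors.filter (fun p : ℕ => (p : ℝ) ≤ X) : Finset ℕ), p ^ n.factorization p

/-- `S₂`: positive "smooth" integers `m` with
`∏_{p^a ∥ m, p ≤ N^{1/(log log N)³}} p^a ≥ N^{γ / log log N}`. -/
def S2set (N : ℕ) (γ : ℝ) : Set ℤ :=
  {m | 0 < m ∧ (N : ℝ) ^ (γ / Real.log (Real.log N)) ≤
      (smoothPart m.natAbs ((N : ℝ) ^ ((Real.log (Real.log N)) ^ 3)⁻¹) : ℝ)}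

/-- `m₀(i,s) = ⌈γ s (i + 3 - log₂ s)/100⌉`. -/
def mSmall (γ : ℝ) (s i : ℕ) : ℕ := ⌈γ * s * ((i : ℝ) + 3 - Real.logb 2 s) / 100⌉₊

/-- Membership in `U(i,s)`: products of `m₀(i,s)` distinct primes from
`[N^{1/2^{i+1}}, N^{1/2^i}]`. -/
def inU (N : ℕ) (γ : ℝ) (s i : ℕ) (u : ℕ) : Prop :=
  Squarefree u ∧ u.primeFactors.card = mSmall γ s i ∧
    ∀ p ∈ u.primeFactors,
      (N : ℝ) ^ (((2 : ℝ) ^ (i + 1))⁻¹) ≤ (p : ℝ) ∧ (p : ℝ) ≤ (N : ℝ) ^ (((2 : ℝ) ^ i)⁻¹)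

/-- `X(i,s)`: positive integers `n ≤ N` divisible by at least `m₀(i,s)` distinct primes
from `[N^{1/2^{i+1}}, N^{1/2^i}]`. -/
def clusterSet (N : ℕ) (γ : ℝ) (s i : ℕ) : Finset ℕ :=
  (Finset.Icc 1 N).filter fun n =>
    mSmall γ s i ≤ (n.primeFactors.filter fun p =>
      (N : ℝ) ^ (((2 : ℝ) ^ (i + 1))⁻¹) ≤ (p : ℝ) ∧ (p : ℝ) ≤ (N : ℝ) ^ (((2 : ℝ) ^ i)⁻¹)).card

/-- The triple sum `Σ_{s=2g+1}^{(log log N)³} Σ_{log₂ s - 2 ≤ i ≤ 6 log log log N}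
Σ_{u ∈ U(i,s)} 2^s 1_{u ∣ n} tg(n)` appearing in the majorants. -/
def nuTail (N : ℕ) (γ : ℝ) (g : ℕ) (tg : ℤ → ℝ) (n : ℤ) : ℝ :=
  ∑ s ∈ Finset.Icc (2 * g + 1) ⌊(Real.log (Real.log N)) ^ 3⌋₊,
    ∑ i ∈ Finset.range (⌊6 * Real.log (Real.log (Real.log N))⌋₊ + 1),
      if Real.logb 2 (s : ℝ) - 2 ≤ (i : ℝ) then
        (2 : ℝ) ^ s * (((n.natAbs.divisors.filter (inU N γ s i)).card : ℕ) : ℝ) * tg n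
      else 0

/-- The majorant `ν₀` for the normalised divisor function, with `γ = 1/g`. -/
def nu0 (N g : ℕ) (C₁ : ℝ) (n : ℤ) : ℝ :=
  (2 : ℝ) ^ (2 * g) * tauTildeG N (g : ℝ)⁻¹ n +
    nuTail N (g : ℝ)⁻¹ g (tauTildeG N (g : ℝ)⁻¹) n +
    if n ∈ S1set N C₁ ∪ S2set N (g : ℝ)⁻¹ then tauTilde N n else 0

/-- `w(N) = (1/2) log log N`. -/
def wN (N : ℕ) : ℝ := Real.log (Real.log N) / 2

/-- Primes `p < w(N)`. -/
def smallPrimes (N : ℕ) : Finset ℕ :=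
  (Finset.range (⌈wN N⌉₊ + 1)).filter fun p : ℕ => p.Prime ∧ (p : ℝ) < wN N

/-- Primes `p ≤ w(N)`. -/
def smallPrimesLe (N : ℕ) : Finset ℕ :=
  (Finset.range (⌈wN N⌉₊ + 1)).filter fun p : ℕ => p.Prime ∧ (p : ℝ) ≤ wN N

/-- `W = ∏_{p < w(N)} p`. -/
def Wp (N : ℕ) : ℕ := ∏ p ∈ smallPrimes N, p

/-- `W̃ = ∏_{p ≤ w(N)} p^{⌊C₁ log_p log N⌋}`. -/
def Wt (N : ℕ) (C₁ : ℝ) : ℕ :=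
  ∏ p ∈ smallPrimesLe N, p ^ ⌊C₁ * (Real.log (Real.log N) / Real.log p)⌋₊

/-- `ϖ(n)`: the `w(N)`-smooth part of `n`. -/
def varpi (N : ℕ) (n : ℕ) : ℕ :=
  ∏ p ∈ (n.primeFactors.filter (fun p : ℕ => (p : ℝ) ≤ wN N) : Finset ℕ), p ^ n.factorization p

/-- The `W`-tricked normalised divisor function
`τ̃'(n) = (W/φ(W)) (log N)⁻¹ Σ_{d ∣ n, (d,W)=1} 1`. -/
def tauW (N : ℕ) (n : ℤ) : ℝ :=
  (Wp N : ℝ) / ((Wp N).totient : ℝ) * (Real.log N)⁻¹ *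
    (((n.natAbs.divisors.filter (fun e => Nat.Coprime e (Wp N))).card : ℕ) : ℝ)

/-- The truncated `W`-tricked normalised divisor function
`τ̃'_γ(n) = (W/φ(W)) (γ log N)⁻¹ Σ_{d ∣ n, d ≤ N^γ, (d,W)=1} 1`. -/
def tauWG (N : ℕ) (γ : ℝ) (n : ℤ) : ℝ :=
  (Wp N : ℝ) / ((Wp N).totient : ℝ) * (γ * Real.log N)⁻¹ *
    (((n.natAbs.divisors.filter (fun e : ℕ =>
        (e : ℝ) ≤ (N : ℝ) ^ γ ∧ Nat.Coprime e (Wp N))).card : ℕ) : ℝ)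

/-- The truncated `W`-tricked majorant `ν₀'`, with `γ = 1/g`. -/
def nu0' (N g : ℕ) (n : ℤ) : ℝ :=
  (2 : ℝ) ^ (2 * g) * tauWG N (g : ℝ)⁻¹ n + nuTail N (g : ℝ)⁻¹ g (tauWG N (g : ℝ)⁻¹) n
/-! If none of the three alternatives holds, write `n = m · ∏_{p ∈ P} p` with `m` the
`N^{1/(log log N)³}`-smooth part of `n`. As `n ∉ S₁`, the rough primes `p ∈ P` divide `n` only
once, and as `n ∉ S₂`, `m ≤ N^{γ/2}`. Each `p ∈ P` lies in a superdyadic interval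
`[N^{1/2^{i+1}}, N^{1/2^i}]` with `i ≤ 6 log log log N`. The primes with `i < log₂ s - 2` exceed
`N^{2/s}`, so there are at most `s/2` of them. For the others, the failure of the third alternative
bounds how many lie in each interval, and summing the weights `2^{-i} ≥ log p / log N` gives a total
weight at most `8γ/25`. By Markov's inequality over subsets, at least `17/25` of the subsets `S` of
these primes have `∏_{p ∈ S} p ≤ N^{γ/2}`, and then every `e · ∏_{p ∈ S} p` with `e ∣ m` is a
divisor of `n` below `N^γ`. Hence `n` has at least `(17/25) 2^{-s/2} τ(n)` divisors below `N^γ`,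
contradicting `τ̃(n) ≥ 2^s τ̃_γ(n)` since `2^{s/2} > 2`. -/

theorem sum_range_add_three_mul_inv_two_pow (K : ℕ) :
    ∑ j ∈ range K, ((j : ℝ) + 3) * ((2 : ℝ) ^ j)⁻¹ = 8 - 2 * ((K : ℝ) + 4) * ((2 : ℝ) ^ K)⁻¹ := by
  induction K with
  | zero => norm_num
  | succ k ih =>
    rw [sum_range_succ, ih, pow_succ, mul_inv]
    push_cast
    ring

theorem sum_add_three_mul_inv_two_pow_le (I : Finset ℕ) :
    ∑ j ∈ I, ((j : ℝ) + 3) * ((2 : ℝ) ^ j)⁻¹ ≤ 8 := by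
  obtain ⟨K, hK⟩ : ∃ K, I ⊆ range K :=
    ⟨I.sup id + 1, fun j hj => mem_range.2 (Nat.lt_succ_of_le (le_sup (f := id) hj))⟩
  have htail : 0 ≤ 2 * ((K : ℝ) + 4) * ((2 : ℝ) ^ K)⁻¹ := by positivity
  calc ∑ j ∈ I, ((j : ℝ) + 3) * ((2 : ℝ) ^ j)⁻¹
      ≤ ∑ j ∈ range K, ((j : ℝ) + 3) * ((2 : ℝ) ^ j)⁻¹ :=
        sum_le_sum_of_subset_of_nonneg hK fun _ _ _ => by positivity
    _ ≤ 8 := by rw [sum_range_add_three_mul_inv_two_pow]; linarith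

theorem sum_inv_two_pow_le_of_card_fiber_le {α : Type*} (A : Finset α) (g : α → ℕ) {c : ℝ}
    (hc : 0 ≤ c) (h : ∀ a ∈ A, (#{b ∈ A | g b = g a} : ℝ) ≤ c * (g a + 3)) :
    ∑ a ∈ A, ((2 : ℝ) ^ g a)⁻¹ ≤ 8 * c := by
  rw [sum_comp (fun j => ((2 : ℝ) ^ j)⁻¹) g]
  calc ∑ j ∈ A.image g, #{a ∈ A | g a = j} • ((2 : ℝ) ^ j)⁻¹
      ≤ ∑ j ∈ A.image g, c * (((j : ℝ) + 3) * ((2 : ℝ) ^ j)⁻¹) := by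
        gcongr with j hj
        obtain ⟨a, ha, rfl⟩ := mem_image.1 hj
        rw [nsmul_eq_mul, ← mul_assoc]
        gcongr
        exact h a ha
    _ ≤ 8 * c := by
        rw [← mul_sum, mul_comm]
        gcongr
        exact sum_add_three_mul_inv_two_pow_le _

theorem sum_inv_two_pow_le_of_card_fiber_le_logb {α : Type*} (A : Finset α) (ι : α → ℕ)
    {c s : ℝ} (hc : 0 ≤ c) (hs : 1 ≤ s) (hA : ∀ a ∈ A, Real.logb 2 s - 2 ≤ ι a)
    (h : ∀ a ∈ A, (#{b ∈ A | ι b = ι a} : ℝ) ≤ c * (ι a + 3 - Real.logb 2 s)) :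
    ∑ a ∈ A, ((2 : ℝ) ^ ι a)⁻¹ ≤ 32 * c / s := by
  set σ := Real.logb 2 s
  -- Shifting the indices down by `i₀` costs a factor `2^{-i₀} ≤ 4/s` and turns
  -- `i + 3 - σ` into at most `(i - i₀) + 3`.
  set i₀ := ⌈σ - 2⌉₊
  have hσ : 0 ≤ σ := Real.logb_nonneg one_lt_two hs
  have hi₀σ : (i₀ : ℝ) ≤ σ := by
    rcases le_or_gt (σ - 2) 0 with h2 | h2
    · simp [i₀, Nat.ceil_eq_zero.2 h2, hσ]
    · linarith [Nat.ceil_lt_add_one h2.le]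
  have hi₀s : s / 4 ≤ (2 : ℝ) ^ i₀ := by
    calc s / 4 = (2 : ℝ) ^ (σ - 2) := by
          rw [Real.rpow_sub two_pos, Real.rpow_logb two_pos (by norm_num) (by linarith)]; norm_num
      _ ≤ (2 : ℝ) ^ i₀ := by
          rw [← Real.rpow_natCast]
          exact Real.rpow_le_rpow_of_exponent_le one_le_two (Nat.le_ceil _)
  have hshift : ∀ a ∈ A, ι a = i₀ + (ι a - i₀) := fun a ha =>
    (Nat.add_sub_of_le (Nat.ceil_le.2 (hA a ha))).symm
  have hfiber : ∀ a ∈ A, (#{b ∈ A | ι b - i₀ = ι a - i₀} : ℝ) ≤ c * ((ι a - i₀ : ℕ) + 3) := by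
    intro a ha
    have heq : ({b ∈ A | ι b - i₀ = ι a - i₀} : Finset α) = {b ∈ A | ι b = ι a} :=
      filter_congr fun b hb => by rw [hshift a ha, hshift b hb]; omega
    rw [heq, Nat.cast_sub (Nat.ceil_le.2 (hA a ha))]
    exact (h a ha).trans (by gcongr; linarith)
  calc ∑ a ∈ A, ((2 : ℝ) ^ ι a)⁻¹ = ((2 : ℝ) ^ i₀)⁻¹ * ∑ a ∈ A, ((2 : ℝ) ^ (ι a - i₀))⁻¹ := by
        rw [mul_sum]
        refine sum_congr rfl fun a ha => ?_
        rw [← mul_inv, ← pow_add, ← hshift a ha]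
    _ ≤ (s / 4)⁻¹ * (8 * c) := by
        gcongr
        exact sum_inv_two_pow_le_of_card_fiber_le A _ hc hfiber
    _ = 32 * c / s := by field_simp; ring

theorem two_mul_sum_powerset_sum {α : Type*} (A : Finset α) (w : α → ℝ) :
    2 * ∑ S ∈ A.powerset, ∑ a ∈ S, w a = 2 ^ #A * ∑ a ∈ A, w a := by
  have hcompl : ∑ S ∈ A.powerset, ∑ a ∈ A \ S, w a = ∑ S ∈ A.powerset, ∑ a ∈ S, w a :=
    sum_nbij' (A \ ·) (A \ ·) (fun _ _ => mem_powerset.2 sdiff_subset)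
      (fun _ _ => mem_powerset.2 sdiff_subset)
      (fun _ hS => Finset.sdiff_sdiff_eq_self (mem_powerset.1 hS))
      (fun _ hS => Finset.sdiff_sdiff_eq_self (mem_powerset.1 hS)) fun _ _ => rfl
  have hsplit : ∀ S ∈ A.powerset, ∑ a ∈ S, w a + ∑ a ∈ A \ S, w a = ∑ a ∈ A, w a :=
    fun S hS => (add_comm _ _).trans (sum_sdiff (mem_powerset.1 hS))
  have := sum_congr rfl hsplit
  rw [sum_add_distrib, hcompl, sum_const, card_powerset, nsmul_eq_mul] at this
  push_cast at this
  linarith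

theorem two_pow_card_mul_le_card_filter_powerset {α : Type*} (A : Finset α) {w : α → ℝ}
    (hw : ∀ a ∈ A, 0 ≤ w a) {c : ℝ} (hc : 0 < c) :
    (2 : ℝ) ^ #A * (1 - (∑ a ∈ A, w a) / (2 * c)) ≤ #{S ∈ A.powerset | ∑ a ∈ S, w a ≤ c} := by
  set bad := {S ∈ A.powerset | ¬ ∑ a ∈ S, w a ≤ c}
  have hmarkov : #bad * c ≤ (2 : ℝ) ^ #A * (∑ a ∈ A, w a) / 2 := by
    calc #bad * c ≤ ∑ S ∈ bad, ∑ a ∈ S, w a := by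
          rw [← nsmul_eq_mul]
          exact card_nsmul_le_sum _ _ _ fun S hS => (not_le.1 (mem_filter.1 hS).2).le
      _ ≤ ∑ S ∈ A.powerset, ∑ a ∈ S, w a :=
          sum_le_sum_of_subset_of_nonneg (filter_subset _ _) fun S hS _ =>
            sum_nonneg fun a ha => hw a (mem_powerset.1 hS ha)
      _ = (2 : ℝ) ^ #A * (∑ a ∈ A, w a) / 2 := by linarith [two_mul_sum_powerset_sum A w]
  have hcard : (#{S ∈ A.powerset | ∑ a ∈ S, w a ≤ c} : ℝ) + #bad = 2 ^ #A := by
    have := card_filter_add_card_filter_not (s := A.powerset) (fun S => ∑ a ∈ S, w a ≤ c)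
    rw [card_powerset] at this
    exact_mod_cast this
  have hbad : (#bad : ℝ) ≤ 2 ^ #A * (∑ a ∈ A, w a) / (2 * c) := by
    rw [le_div_iff₀ (by positivity)]
    linarith
  rw [mul_one_sub, ← mul_div_assoc]
  linarith

theorem card_divisors_prod_primes {P : Finset ℕ} (hP : ∀ p ∈ P, p.Prime) :
    #(∏ p ∈ P, p).divisors = 2 ^ #P := by
  rw [← ArithmeticFunction.sigma_zero_apply,
    ArithmeticFunction.isMultiplicative_sigma.map_prod_of_prime P hP, ← prod_const]
  refine prod_congr rfl fun p hp => ?_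
  rw [ArithmeticFunction.sigma_zero_apply, (hP p hp).divisors, card_pair (hP p hp).one_lt.ne]

theorem coprime_prod_of_not_dvd {m : ℕ} {S : Finset ℕ} (hS : ∀ p ∈ S, p.Prime ∧ ¬ p ∣ m) :
    (∏ p ∈ S, p).Coprime m :=
  Nat.Coprime.prod_left fun p hp => ((hS p hp).1.coprime_iff_not_dvd).2 (hS p hp).2

theorem card_divisors_mul_prod_primes {m : ℕ} {P : Finset ℕ}
    (hP : ∀ p ∈ P, p.Prime ∧ ¬ p ∣ m) : #(m * ∏ p ∈ P, p).divisors = #m.divisors * 2 ^ #P := by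
  rw [Nat.Coprime.card_divisors_mul (coprime_prod_of_not_dvd hP).symm,
    card_divisors_prod_primes fun p hp => (hP p hp).1]

theorem card_mul_card_le_card_filter_divisors {m : ℕ} (hm : m ≠ 0) {P : Finset ℕ}
    (hP : ∀ p ∈ P, p.Prime ∧ ¬ p ∣ m) {B : ℝ} (G : Finset (Finset ℕ))
    (hG : ∀ S ∈ G, S ⊆ P ∧ ((m * ∏ p ∈ S, p : ℕ) : ℝ) ≤ B) :
    #m.divisors * #G ≤ #((m * ∏ p ∈ P, p).divisors.filter fun e : ℕ => (e : ℝ) ≤ B) := by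
  have hprime : ∀ S ∈ G, ∀ p ∈ S, p.Prime ∧ ¬ p ∣ m := fun S hS p hp => hP p ((hG S hS).1 hp)
  rw [← card_product]
  refine card_le_card_of_injOn (fun x => x.1 * ∏ p ∈ x.2, p) ?_ ?_
  · rintro ⟨e, S⟩ hx
    simp only [coe_product, Set.mem_prod, mem_coe, Nat.mem_divisors] at hx
    obtain ⟨⟨he, -⟩, hS⟩ := hx
    rw [mem_coe, mem_filter, Nat.mem_divisors]
    refine ⟨⟨mul_dvd_mul he (prod_dvd_prod_of_subset _ _ _ (hG S hS).1), ?_⟩, ?_⟩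
    · exact mul_ne_zero hm (prod_ne_zero_iff.2 fun p hp => (hP p hp).1.ne_zero)
    · refine le_trans ?_ (hG S hS).2
      exact_mod_cast Nat.mul_le_mul_right _ (Nat.le_of_dvd (Nat.pos_of_ne_zero hm) he)
  · rintro ⟨e₁, S₁⟩ h₁ ⟨e₂, S₂⟩ h₂ heq
    simp only [coe_product, Set.mem_prod, mem_coe, Nat.mem_divisors] at h₁ h₂ heq
    -- `e` is recovered as `gcd (e * ∏ p ∈ S, p) m`, then `S` as the prime factors of the quotient.
    have hgcd : ∀ e S, e ∣ m → S ∈ G → (e * ∏ p ∈ S, p).gcd m = e := fun e S he hS => by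
      rw [Nat.Coprime.gcd_mul_right_cancel e (coprime_prod_of_not_dvd (hprime S hS)),
        Nat.gcd_eq_left he]
    have he : e₁ = e₂ := by
      rw [← hgcd e₁ S₁ h₁.1.1 h₁.2, ← hgcd e₂ S₂ h₂.1.1 h₂.2, heq]
    subst he
    have hprod := Nat.eq_of_mul_eq_mul_left
      (Nat.pos_of_ne_zero (ne_zero_of_dvd_ne_zero hm h₁.1.1)) heq
    rw [Prod.mk.injEq]
    refine ⟨rfl, ?_⟩
    rw [← Nat.primeFactors_prod fun p hp => (hprime S₁ h₁.2 p hp).1,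
      ← Nat.primeFactors_prod fun p hp => (hprime S₂ h₂.2 p hp).1, hprod]

theorem mul_card_le_one_of_rpow_le {N a : ℝ} (hN : 1 < N) {P : Finset ℕ}
    (hprod : ((∏ p ∈ P, p : ℕ) : ℝ) ≤ N) (hP : ∀ p ∈ P, N ^ a ≤ p) : a * #P ≤ 1 := by
  rw [← Real.rpow_le_rpow_left_iff hN, Real.rpow_one, Real.rpow_mul (by linarith),
    Real.rpow_natCast, ← prod_const]
  push_cast at hprod
  exact (prod_le_prod (fun _ _ => by positivity) hP).trans hprod

theorem smoothPart_mul_prod_eq {n : ℕ} (hn : n ≠ 0) {X : ℝ}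
    (h : ∀ p ∈ n.primeFactors, X < p → ¬ p ^ 2 ∣ n) :
    smoothPart n X * ∏ p ∈ n.primeFactors.filter (fun p : ℕ => X < p), p = n := by
  have hrough : ∀ p ∈ n.primeFactors.filter (fun p : ℕ => ¬ (p : ℝ) ≤ X),
      p ^ n.factorization p = p := by
    intro p hp
    obtain ⟨hpn, hpX⟩ := mem_filter.1 hp
    have hp := Nat.prime_of_mem_primeFactors hpn
    have h1 : 1 ≤ n.factorization p :=
      (hp.dvd_iff_one_le_factorization hn).1 (Nat.dvd_of_mem_primeFactors hpn)
    have h2 : ¬ 2 ≤ n.factorization p := fun h2 =>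
      h p hpn (not_le.1 hpX) ((hp.pow_dvd_iff_le_factorization hn).2 h2)
    rw [show n.factorization p = 1 by omega, pow_one]
  conv_rhs => rw [← Nat.prod_factorization_pow_eq_self hn, Finsupp.prod, Nat.support_factorization,
    ← prod_filter_mul_prod_filter_not n.primeFactors (fun p : ℕ => (p : ℝ) ≤ X),
    prod_congr rfl hrough]
  simp only [smoothPart, not_le]

theorem not_dvd_smoothPart {n p : ℕ} (hp : p.Prime) {X : ℝ} (hX : X < p) :
    ¬ p ∣ smoothPart n X := by
  intro hdvd
  obtain ⟨q, hq, hpq⟩ := (Prime.dvd_finsetProd_iff hp.prime _).1 hdvd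
  obtain ⟨hqn, hqX⟩ := mem_filter.1 hq
  have hpq := (Nat.prime_dvd_prime_iff_eq hp (Nat.prime_of_mem_primeFactors hqn)).1
    (hp.dvd_of_dvd_pow hpq)
  exact not_le.2 (hpq ▸ hX) hqX

def dyadicIndex (N x : ℝ) : ℕ := ⌊Real.logb 2 (Real.log N / Real.log x)⌋₊

section Dyadic

variable {N x : ℝ}

theorem two_pow_dyadicIndex_le (hx : 1 < x) (hxN : x ≤ N) :
    (2 : ℝ) ^ dyadicIndex N x ≤ Real.log N / Real.log x := by
  have hratio : 1 ≤ Real.log N / Real.log x :=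
    (one_le_div (Real.log_pos hx)).2 (Real.log_le_log (by linarith) hxN)
  have := Nat.floor_le (Real.logb_nonneg one_lt_two hratio)
  rwa [Real.le_logb_iff_rpow_le one_lt_two (by linarith), Real.rpow_natCast] at this

theorem log_div_log_lt_two_pow_dyadicIndex_succ (hx : 1 < x) (hxN : x ≤ N) :
    Real.log N / Real.log x < (2 : ℝ) ^ (dyadicIndex N x + 1) := by
  have hratio : 0 < Real.log N / Real.log x :=
    div_pos (Real.log_pos (by linarith)) (Real.log_pos hx)
  have := Nat.lt_floor_add_one (Real.logb 2 (Real.log N / Real.log x))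
  rwa [Real.logb_lt_iff_lt_rpow one_lt_two hratio, ← Nat.cast_succ, Real.rpow_natCast] at this

theorem le_rpow_inv_two_pow_dyadicIndex (hx : 1 < x) (hxN : x ≤ N) :
    x ≤ N ^ ((2 : ℝ) ^ dyadicIndex N x)⁻¹ := by
  have h := two_pow_dyadicIndex_le hx hxN
  rw [le_div_iff₀ (Real.log_pos hx)] at h
  rw [Real.le_rpow_iff_log_le (by linarith) (by linarith), inv_mul_eq_div,
    le_div_iff₀ (by positivity)]
  linarith

theorem rpow_inv_two_pow_succ_dyadicIndex_le (hx : 1 < x) (hxN : x ≤ N) :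
    N ^ ((2 : ℝ) ^ (dyadicIndex N x + 1))⁻¹ ≤ x := by
  have h := log_div_log_lt_two_pow_dyadicIndex_succ hx hxN
  rw [div_lt_iff₀ (Real.log_pos hx)] at h
  rw [Real.rpow_le_iff_le_log (by linarith) (by linarith), inv_mul_eq_div,
    div_le_iff₀ (by positivity)]
  linarith

theorem dyadicIndex_le_logb (hx : 1 < x) (hxN : x ≤ N) {K : ℝ} (hK : 0 < K)
    (h : N ^ K⁻¹ < x) : (dyadicIndex N x : ℝ) ≤ Real.logb 2 K := by
  rw [Real.rpow_lt_iff_lt_log (by linarith) (by linarith), inv_mul_eq_div,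
    div_lt_iff₀ hK, ← div_lt_iff₀' (Real.log_pos hx)] at h
  rw [Real.le_logb_iff_rpow_le one_lt_two hK, Real.rpow_natCast]
  exact (two_pow_dyadicIndex_le hx hxN).trans h.le

end Dyadic

def dyadicPrimeFactors (N n i : ℕ) : Finset ℕ :=
  n.primeFactors.filter fun p : ℕ =>
    (N : ℝ) ^ (((2 : ℝ) ^ (i + 1))⁻¹) ≤ (p : ℝ) ∧ (p : ℝ) ≤ (N : ℝ) ^ (((2 : ℝ) ^ i)⁻¹)

theorem mem_dyadicPrimeFactors_dyadicIndex {N n p : ℕ} (hp : p ∈ n.primeFactors) (hpN : p ≤ N) :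
    p ∈ dyadicPrimeFactors N n (dyadicIndex N p) := by
  have hp1 : (1 : ℝ) < p := by exact_mod_cast (Nat.prime_of_mem_primeFactors hp).one_lt
  have hpN' : (p : ℝ) ≤ N := by exact_mod_cast hpN
  exact mem_filter.2 ⟨hp, rpow_inv_two_pow_succ_dyadicIndex_le hp1 hpN',
    le_rpow_inv_two_pow_dyadicIndex hp1 hpN'⟩

theorem card_le_of_dyadicIndex_lt {N n : ℕ} (hN : 1 < (N : ℝ)) (hn : n ≠ 0) (hnN : n ≤ N)
    {s : ℝ} (hs : 0 < s) {Q : Finset ℕ} (hQ : Q ⊆ n.primeFactors)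
    (hι : ∀ p ∈ Q, (dyadicIndex N p : ℝ) < Real.logb 2 s - 2) : (#Q : ℝ) ≤ s / 2 := by
  have hprod : ((∏ p ∈ Q, p : ℕ) : ℝ) ≤ N := by
    have := (prod_dvd_prod_of_subset _ _ id hQ).trans (Nat.prod_primeFactors_dvd n)
    exact_mod_cast (Nat.le_of_dvd (Nat.pos_of_ne_zero hn) this).trans hnN
  have hlow : ∀ p ∈ Q, (N : ℝ) ^ (2 / s) ≤ p := by
    intro p hp
    have hmem := mem_dyadicPrimeFactors_dyadicIndex (hQ hp)
      ((Nat.le_of_mem_primeFactors (hQ hp)).trans hnN)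
    refine le_trans (Real.rpow_le_rpow_of_exponent_le hN.le ?_) (mem_filter.1 hmem).2.1
    have h4 : (2 : ℝ) ^ dyadicIndex N p < s / 4 := by
      calc (2 : ℝ) ^ dyadicIndex N p = (2 : ℝ) ^ (dyadicIndex N p : ℝ) :=
            (Real.rpow_natCast _ _).symm
        _ < (2 : ℝ) ^ (Real.logb 2 s - 2) :=
            Real.rpow_lt_rpow_of_exponent_lt one_lt_two (hι p hp)
        _ = s / 4 := by
            rw [Real.rpow_sub two_pos, Real.rpow_logb two_pos (by norm_num) hs]; norm_num
    rw [← inv_div, pow_succ]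
    exact inv_anti₀ (by positivity) (by linarith)
  have := mul_card_le_one_of_rpow_le hN hprod hlow
  rw [div_mul_eq_mul_div, div_le_one hs] at this
  linarith

def HasCluster (N : ℕ) (γ s : ℝ) (n : ℕ) : Prop :=
  ∃ i : ℕ, Real.logb 2 s - 2 ≤ (i : ℝ) ∧ (i : ℝ) ≤ 6 * Real.log (Real.log (Real.log N)) ∧
    γ * s * ((i : ℝ) + 3 - Real.logb 2 s) / 100 ≤ (#(dyadicPrimeFactors N n i) : ℝ) ∧
    ∀ p : ℕ, p.Prime → (N : ℝ) ^ (((2 : ℝ) ^ (i + 1))⁻¹) ≤ (p : ℝ) →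
      (p : ℝ) ≤ (N : ℝ) ^ (((2 : ℝ) ^ i)⁻¹) → ¬(p ^ 2 ∣ n)

/-- Guarantees `(log N)^{C₁} < N^{1/(log log N)⁶}`, so that primes beyond `N^{1/(log log N)⁶}`
divide an integer outside `S₁` at most once. -/
def IsLarge (N : ℕ) (C₁ : ℝ) : Prop :=
  2 ≤ Real.log (Real.log N) ∧ C₁ * Real.log (Real.log N) ^ 7 < Real.log N

theorem eventually_isLarge (C₁ : ℝ) : ∀ᶠ N : ℕ in atTop, IsLarge N C₁ := by
  have hlog : Tendsto (fun N : ℕ => Real.log N) atTop atTop :=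
    Real.tendsto_log_atTop.comp tendsto_natCast_atTop_atTop
  have hc : 0 < (|C₁| + 1)⁻¹ := by positivity
  have hsmall : ∀ᶠ x : ℝ in atTop, C₁ * Real.log x ^ 7 < x := by
    filter_upwards [(Real.isLittleO_pow_log_id_atTop (n := 7)).bound hc,
      eventually_gt_atTop 0] with x hbound hx
    rw [Real.norm_eq_abs, Real.norm_eq_abs, id, abs_of_pos hx] at hbound
    have h1 : C₁ * Real.log x ^ 7 ≤ |C₁| * |Real.log x ^ 7| :=
      (le_abs_self _).trans (abs_mul _ _).le
    have h2 : |C₁| * |Real.log x ^ 7| ≤ |C₁| * ((|C₁| + 1)⁻¹ * x) := by gcongr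
    have h3 : |C₁| * ((|C₁| + 1)⁻¹ * x) < x := by
      rw [← mul_assoc, ← div_eq_mul_inv]
      exact mul_lt_of_lt_one_left hx ((div_lt_one (by positivity)).2 (by linarith))
    linarith
  exact ((Real.tendsto_log_atTop.comp hlog).eventually_ge_atTop 2).and (hlog.eventually hsmall)

namespace IsLarge

variable {N : ℕ} {C₁ : ℝ}

theorem one_lt_log (hN : IsLarge N C₁) : 1 < Real.log N :=
  (Real.log_pos_iff (Real.log_natCast_nonneg N)).1 (by linarith [hN.1])

theorem one_lt (hN : IsLarge N C₁) : 1 < (N : ℝ) :=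
  (Real.log_pos_iff (Nat.cast_nonneg N)).1 (by linarith [hN.one_lt_log])

theorem log_rpow_lt_rpow (hN : IsLarge N C₁) {r : ℝ}
    (hr : (Real.log (Real.log N) ^ 6)⁻¹ ≤ r) : Real.log N ^ C₁ < (N : ℝ) ^ r := by
  have hL := hN.one_lt_log
  have hN1 := hN.one_lt
  obtain ⟨hLL, hC⟩ := hN
  rw [Real.rpow_def_of_pos (by linarith), Real.rpow_def_of_pos (by linarith), Real.exp_lt_exp]
  calc Real.log (Real.log N) * C₁
      = C₁ * Real.log (Real.log N) ^ 7 / Real.log (Real.log N) ^ 6 := by field_simp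
    _ < Real.log N * (Real.log (Real.log N) ^ 6)⁻¹ := by rw [div_eq_mul_inv]; gcongr
    _ ≤ Real.log N * r := by gcongr

theorem not_sq_dvd (hN : IsLarge N C₁) {n p : ℕ} (hS1 : (n : ℤ) ∉ S1set N C₁) (hp : p.Prime)
    {r : ℝ} (hr : (Real.log (Real.log N) ^ 6)⁻¹ ≤ r) (hpr : (N : ℝ) ^ r ≤ p) : ¬ p ^ 2 ∣ n := by
  refine fun hdvd => hS1 ⟨p, 2, hp, le_rfl, ?_, by exact_mod_cast hdvd⟩
  have hp1 : (1 : ℝ) ≤ p := by exact_mod_cast hp.one_lt.le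
  calc Real.log N ^ C₁ < p := (hN.log_rpow_lt_rpow hr).trans_le hpr
    _ ≤ (p : ℝ) ^ 2 := by nlinarith

theorem two_pow_succ_le (hN : IsLarge N C₁) {i : ℕ}
    (hi : (i : ℝ) ≤ 6 * Real.log (Real.log (Real.log N))) :
    (2 : ℝ) ^ (i + 1) ≤ Real.log (Real.log N) ^ 6 := by
  have hLL := hN.1
  have hL3 : 0 ≤ Real.log (Real.log (Real.log N)) := Real.log_nonneg (by linarith)
  have hpow : (2 : ℝ) ^ i ≤ Real.log (Real.log N) ^ 5 := by
    rw [← Real.log_le_log_iff (by positivity) (by positivity), Real.log_pow, Real.log_pow]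
    push_cast
    nlinarith [Real.log_two_lt_d9, mul_le_mul_of_nonneg_right hi (Real.log_pos one_lt_two).le]
  calc (2 : ℝ) ^ (i + 1) = 2 * 2 ^ i := by ring
    _ ≤ Real.log (Real.log N) * Real.log (Real.log N) ^ 5 := by gcongr
    _ = Real.log (Real.log N) ^ 6 := by ring

theorem dyadicIndex_le (hN : IsLarge N C₁) {x : ℝ}
    (hx : (N : ℝ) ^ (Real.log (Real.log N) ^ 3)⁻¹ < x) (hxN : x ≤ N) :
    (dyadicIndex N x : ℝ) ≤ 6 * Real.log (Real.log (Real.log N)) := by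
  have hLL := hN.1
  have hx1 : 1 < x := (Real.one_lt_rpow hN.one_lt (by positivity)).trans hx
  refine (dyadicIndex_le_logb hx1 hxN (by positivity) hx).trans ?_
  rw [Real.logb, Real.log_pow, div_le_iff₀ (Real.log_pos one_lt_two)]
  push_cast
  nlinarith [Real.log_two_gt_d9, Real.log_nonneg (by linarith : (1 : ℝ) ≤ Real.log (Real.log N))]

theorem smoothPart_le (hN : IsLarge N C₁) {γ : ℝ} (hγ : 0 < γ) {n : ℕ} (hn : 0 < n)
    (hS2 : (n : ℤ) ∉ S2set N γ) :
    (smoothPart n ((N : ℝ) ^ (Real.log (Real.log N) ^ 3)⁻¹) : ℝ) ≤ (N : ℝ) ^ (γ / 2) := by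
  have hlt : (smoothPart n ((N : ℝ) ^ (Real.log (Real.log N) ^ 3)⁻¹) : ℝ) <
      (N : ℝ) ^ (γ / Real.log (Real.log N)) :=
    not_le.1 fun h => hS2 ⟨by exact_mod_cast hn, h⟩
  refine hlt.le.trans (Real.rpow_le_rpow_of_exponent_le hN.one_lt.le ?_)
  exact div_le_div_of_nonneg_left hγ.le two_pos hN.1

theorem card_dyadicPrimeFactors_lt (hN : IsLarge N C₁) {γ s : ℝ} {n : ℕ}
    (hS1 : (n : ℤ) ∉ S1set N C₁) (hcl : ¬ HasCluster N γ s n) {i : ℕ}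
    (h₁ : Real.logb 2 s - 2 ≤ i) (h₂ : (i : ℝ) ≤ 6 * Real.log (Real.log (Real.log N))) :
    (#(dyadicPrimeFactors N n i) : ℝ) < γ * s * ((i : ℝ) + 3 - Real.logb 2 s) / 100 :=
  not_le.1 fun h => hcl ⟨i, h₁, h₂, h, fun _ hp hlow _ =>
    hN.not_sq_dvd hS1 hp (inv_anti₀ (by positivity) (hN.two_pow_succ_le h₂)) hlow⟩

theorem sum_inv_two_pow_dyadicIndex_le (hN : IsLarge N C₁) {γ s : ℝ} (hγ : 0 < γ) (hs : 1 ≤ s)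
    {n : ℕ} (hS1 : (n : ℤ) ∉ S1set N C₁) (hcl : ¬ HasCluster N γ s n) {A : Finset ℕ}
    (hA : ∀ p ∈ A, p ∈ n.primeFactors ∧ p ≤ N ∧
      (N : ℝ) ^ (Real.log (Real.log N) ^ 3)⁻¹ < p ∧ Real.logb 2 s - 2 ≤ dyadicIndex N p) :
    ∑ p ∈ A, ((2 : ℝ) ^ dyadicIndex N p)⁻¹ ≤ 8 / 25 * γ := by
  have key := sum_inv_two_pow_le_of_card_fiber_le_logb A (dyadicIndex N ·)
    (c := γ * s / 100) (by positivity) hs (fun p hp => (hA p hp).2.2.2) fun p hp => by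
      obtain ⟨-, hpN, hpX, hpι⟩ := hA p hp
      have hsub : A.filter (fun q : ℕ => dyadicIndex N q = dyadicIndex N p) ⊆
          dyadicPrimeFactors N n (dyadicIndex N p) := fun q hq => by
        obtain ⟨hqA, hqp⟩ := mem_filter.1 hq
        rw [← hqp]
        exact mem_dyadicPrimeFactors_dyadicIndex (hA q hqA).1 (hA q hqA).2.1
      calc (#(A.filter fun q : ℕ => dyadicIndex N q = dyadicIndex N p) : ℝ)
          ≤ #(dyadicPrimeFactors N n (dyadicIndex N p)) := by exact_mod_cast card_le_card hsub
        _ ≤ γ * s * ((dyadicIndex N p : ℝ) + 3 - Real.logb 2 s) / 100 :=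
          (hN.card_dyadicPrimeFactors_lt hS1 hcl hpι
            (hN.dyadicIndex_le hpX (by exact_mod_cast hpN))).le
        _ = γ * s / 100 * ((dyadicIndex N p : ℝ) + 3 - Real.logb 2 s) := by ring
  calc ∑ p ∈ A, ((2 : ℝ) ^ dyadicIndex N p)⁻¹ ≤ 32 * (γ * s / 100) / s := key
    _ = 8 / 25 * γ := by field_simp; ring

end IsLarge

structure Splitting (N : ℕ) (γ s : ℝ) (n : ℕ) where
  m : ℕ
  P : Finset ℕ
  A : Finset ℕ
  w : ℕ → ℝ
  mul_prod_eq : m * ∏ p ∈ P, p = n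
  prime_not_dvd : ∀ p ∈ P, p.Prime ∧ ¬ p ∣ m
  le_rpow : (m : ℝ) ≤ (N : ℝ) ^ (γ / 2)
  subset : A ⊆ P
  w_nonneg : ∀ p ∈ A, 0 ≤ w p
  le_rpow_w : ∀ p ∈ A, (p : ℝ) ≤ (N : ℝ) ^ w p
  sum_w_le : ∑ p ∈ A, w p ≤ 8 / 25 * γ
  card_sdiff_le : (#(P \ A) : ℝ) ≤ s / 2

namespace Splitting

variable {N n : ℕ} {γ s : ℝ}

theorem m_ne_zero (sp : Splitting N γ s n) (hn : n ≠ 0) : sp.m ≠ 0 :=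
  fun h => hn (by rw [← sp.mul_prod_eq, h, zero_mul])

theorem card_divisors_filter_ge (sp : Splitting N γ s n) (hN : 1 < (N : ℝ)) (hγ : 0 < γ)
    (hn : n ≠ 0) :
    17 / 25 * (#sp.m.divisors * 2 ^ #sp.A : ℝ) ≤
      #(n.divisors.filter fun e : ℕ => (e : ℝ) ≤ (N : ℝ) ^ γ) := by
  set G := sp.A.powerset.filter fun S => ∑ p ∈ S, sp.w p ≤ γ / 2
  have hG : (2 : ℝ) ^ #sp.A * (17 / 25) ≤ #G := by
    refine le_trans ?_ (two_pow_card_mul_le_card_filter_powerset sp.A sp.w_nonneg (half_pos hγ))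
    gcongr
    rw [le_sub_comm, div_le_iff₀ (by positivity)]
    linarith [sp.sum_w_le]
  have hsmall : ∀ S ∈ G, S ⊆ sp.P ∧ ((sp.m * ∏ p ∈ S, p : ℕ) : ℝ) ≤ (N : ℝ) ^ γ := by
    intro S hS
    obtain ⟨hSA, hSw⟩ := mem_filter.1 hS
    have hSA := mem_powerset.1 hSA
    refine ⟨hSA.trans sp.subset, ?_⟩
    calc ((sp.m * ∏ p ∈ S, p : ℕ) : ℝ) ≤ (N : ℝ) ^ (γ / 2) * (N : ℝ) ^ (∑ p ∈ S, sp.w p) := by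
          rw [Nat.cast_mul, Nat.cast_prod, Real.rpow_sum_of_pos (by linarith)]
          gcongr with p hp
          · exact sp.le_rpow
          · exact sp.le_rpow_w p (hSA hp)
      _ ≤ (N : ℝ) ^ (γ / 2) * (N : ℝ) ^ (γ / 2) :=
          mul_le_mul_of_nonneg_left (Real.rpow_le_rpow_of_exponent_le hN.le hSw) (by positivity)
      _ = (N : ℝ) ^ γ := by rw [← Real.rpow_add (by linarith)]; ring_nf
  have := card_mul_card_le_card_filter_divisors (sp.m_ne_zero hn) sp.prime_not_dvd G hsmall
  rw [sp.mul_prod_eq] at this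
  calc 17 / 25 * (#sp.m.divisors * 2 ^ #sp.A : ℝ)
      = #sp.m.divisors * (2 ^ #sp.A * (17 / 25)) := by ring
    _ ≤ #sp.m.divisors * #G := by gcongr
    _ ≤ _ := by exact_mod_cast this

theorem tauTilde_lt (sp : Splitting N γ s n) (hN : 1 < (N : ℝ)) (hγ : 0 < γ) (hγ1 : γ ≤ 1)
    (hs : 2 < s) (hn : n ≠ 0) :
    tauTilde N n < (2 : ℝ) ^ s * tauTildeG N γ n := by
  have hτ : (#n.divisors : ℝ) = #sp.m.divisors * 2 ^ #sp.A * 2 ^ #(sp.P \ sp.A) := by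
    have := card_divisors_mul_prod_primes sp.prime_not_dvd
    rw [sp.mul_prod_eq, ← card_sdiff_add_card_eq_card sp.subset] at this
    rw [this]; push_cast; ring
  have hsdiff : (2 : ℝ) ^ #(sp.P \ sp.A) ≤ (2 : ℝ) ^ (s / 2) := by
    rw [← Real.rpow_natCast]
    exact Real.rpow_le_rpow_of_exponent_le one_le_two sp.card_sdiff_le
  have hhalf : 2 < (2 : ℝ) ^ (s / 2) := by
    simpa using Real.rpow_lt_rpow_of_exponent_lt one_lt_two (by linarith : (1 : ℝ) < s / 2)
  have hsq : (2 : ℝ) ^ s = 2 ^ (s / 2) * 2 ^ (s / 2) := by rw [← Real.rpow_add two_pos]; ring_nf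
  have hpos : (0 : ℝ) < #sp.m.divisors * 2 ^ #sp.A := by
    have := card_pos.2 ⟨1, Nat.one_mem_divisors.2 (sp.m_ne_zero hn)⟩
    positivity
  have key : (#n.divisors : ℝ) * γ <
      2 ^ s * #(n.divisors.filter fun e : ℕ => (e : ℝ) ≤ (N : ℝ) ^ γ) :=
    calc (#n.divisors : ℝ) * γ ≤ #sp.m.divisors * 2 ^ #sp.A * 2 ^ (s / 2) := by
          rw [hτ]; nlinarith
      _ < 2 ^ s * (17 / 25 * (#sp.m.divisors * 2 ^ #sp.A : ℝ)) := by
          rw [hsq]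
          nlinarith [mul_pos (mul_pos hpos (by linarith : (0 : ℝ) < 2 ^ (s / 2)))
            (by linarith : (0 : ℝ) < 17 / 25 * 2 ^ (s / 2) - 1)]
      _ ≤ _ := by gcongr; exact sp.card_divisors_filter_ge hN hγ hn
  have hL : 0 < Real.log N := Real.log_pos hN
  rw [tauTilde, tauTildeG, tauZ, Int.natAbs_natCast, mul_left_comm]
  calc (Real.log N)⁻¹ * (#n.divisors : ℝ) = (γ * Real.log N)⁻¹ * (#n.divisors * γ) := by
        field_simp
    _ < _ := mul_lt_mul_of_pos_left key (by positivity)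

end Splitting

theorem IsLarge.exists_splitting {N : ℕ} {C₁ : ℝ} (hN : IsLarge N C₁) {γ s : ℝ} (hγ : 0 < γ)
    (hs : 1 ≤ s) {n : ℕ} (hn : 0 < n) (hnN : n ≤ N) (hS1 : (n : ℤ) ∉ S1set N C₁)
    (hS2 : (n : ℤ) ∉ S2set N γ) (hcl : ¬ HasCluster N γ s n) : Nonempty (Splitting N γ s n) := by
  set X := (N : ℝ) ^ (Real.log (Real.log N) ^ 3)⁻¹
  have hX : (Real.log (Real.log N) ^ 6)⁻¹ ≤ (Real.log (Real.log N) ^ 3)⁻¹ := by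
    have hLL := hN.1
    exact inv_anti₀ (by positivity) (pow_le_pow_right₀ (by linarith) (by norm_num))
  set P := n.primeFactors.filter fun p : ℕ => X < p
  have hP : ∀ p ∈ P, p ∈ n.primeFactors ∧ p ≤ N ∧ X < p := fun p hp =>
    have hpn := (mem_filter.1 hp).1
    ⟨hpn, (Nat.le_of_mem_primeFactors hpn).trans hnN, (mem_filter.1 hp).2⟩
  set A := P.filter fun p : ℕ => Real.logb 2 s - 2 ≤ dyadicIndex N p
  exact ⟨{
    m := smoothPart n X
    P := P
    A := A
    w := fun p => ((2 : ℝ) ^ dyadicIndex N p)⁻¹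
    mul_prod_eq := smoothPart_mul_prod_eq hn.ne' fun p hp hpX =>
      hN.not_sq_dvd hS1 (Nat.prime_of_mem_primeFactors hp) hX hpX.le
    prime_not_dvd := fun p hp => ⟨Nat.prime_of_mem_primeFactors (hP p hp).1,
      not_dvd_smoothPart (Nat.prime_of_mem_primeFactors (hP p hp).1) (hP p hp).2.2⟩
    le_rpow := hN.smoothPart_le hγ hn hS2
    subset := filter_subset _ _
    w_nonneg := fun _ _ => by positivity
    le_rpow_w := fun p hp =>
      have hpP := hP p (mem_filter.1 hp).1
      (mem_filter.1 (mem_dyadicPrimeFactors_dyadicIndex hpP.1 hpP.2.1)).2.2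
    sum_w_le := hN.sum_inv_two_pow_dyadicIndex_le hγ hs hS1 hcl fun p hp =>
      have hpP := hP p (mem_filter.1 hp).1
      ⟨hpP.1, hpP.2.1, hpP.2.2, (mem_filter.1 hp).2⟩
    card_sdiff_le := card_le_of_dyadicIndex_lt hN.one_lt hn.ne' hnN (by linarith)
      (sdiff_subset.trans (filter_subset _ _)) fun p hp => by
        obtain ⟨hpP, hpA⟩ := mem_sdiff.1 hp
        exact not_le.1 fun h => hpA (mem_filter.2 ⟨hpP, h⟩) }⟩

theorem erdos_trichotomy_general (γ : ℝ) (hγ0 : 0 < γ) (hγ1 : γ < 1) (C₁ : ℝ) :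
    ∃ N₀ : ℕ, ∀ N : ℕ, N₀ ≤ N → ∀ n : ℕ, 0 < n → n ≤ N →
      ∀ s : ℝ, 2 / γ < s →
        (2 : ℝ) ^ s * tauTildeG N γ (n : ℤ) ≤ tauTilde N (n : ℤ) →
        (n : ℤ) ∈ S1set N C₁ ∨ (n : ℤ) ∈ S2set N γ ∨
          ∃ i : ℕ, Real.logb 2 s - 2 ≤ (i : ℝ) ∧
            (i : ℝ) ≤ 6 * Real.log (Real.log (Real.log N)) ∧
            γ * s * ((i : ℝ) + 3 - Real.logb 2 s) / 100 ≤
              ((n.primeFactors.filter (fun p : ℕ =>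
                  (N : ℝ) ^ (((2 : ℝ) ^ (i + 1))⁻¹) ≤ (p : ℝ) ∧
                    (p : ℝ) ≤ (N : ℝ) ^ (((2 : ℝ) ^ i)⁻¹))).card : ℝ) ∧
            ∀ p : ℕ, p.Prime → (N : ℝ) ^ (((2 : ℝ) ^ (i + 1))⁻¹) ≤ (p : ℝ) →
              (p : ℝ) ≤ (N : ℝ) ^ (((2 : ℝ) ^ i)⁻¹) → ¬(p ^ 2 ∣ n) := by
  obtain ⟨N₀, hN₀⟩ := (eventually_isLarge C₁).exists_forall_of_atTop
  refine ⟨N₀, fun N hN n hn hnN s hs hτ => ?_⟩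
  have hs2 : 2 < s := lt_of_le_of_lt (by rw [le_div_iff₀ hγ0]; linarith) hs
  by_contra h
  rw [not_or, not_or] at h
  obtain ⟨hS1, hS2, hcl⟩ := h
  obtain ⟨sp⟩ := (hN₀ N hN).exists_splitting hγ0 (by linarith) hn hnN hS1 hS2 hcl
  exact (sp.tauTilde_lt (hN₀ N hN).one_lt hγ0 hγ1.le hs2 hn.ne').not_ge hτ

/-- **Erdős's trichotomy for integers with many divisors.** If `n ≤ N` and
`τ̃(n) ≥ 2^s τ̃_γ(n)` for some `s > 2/γ`, then `n ∈ S₁`, or `n ∈ S₂`, or `n` has a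
cluster of prime factors in a superdyadic interval `[N^{1/2^{i+1}}, N^{1/2^i}]`. -/
theorem erdos_trichotomy (γ : ℝ) (hγ0 : 0 < γ) (hγ1 : γ < 1) (C₁ : ℝ) (hC₁ : 1 < C₁) :
    ∃ N₀ : ℕ, ∀ N : ℕ, N₀ ≤ N → ∀ n : ℕ, 0 < n → n ≤ N →
      ∀ s : ℝ, 2 / γ < s →
        (2 : ℝ) ^ s * tauTildeG N γ (n : ℤ) ≤ tauTilde N (n : ℤ) →
        (n : ℤ) ∈ S1set N C₁ ∨ (n : ℤ) ∈ S2set N γ ∨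
          ∃ i : ℕ, Real.logb 2 s - 2 ≤ (i : ℝ) ∧
            (i : ℝ) ≤ 6 * Real.log (Real.log (Real.log N)) ∧
            γ * s * ((i : ℝ) + 3 - Real.logb 2 s) / 100 ≤
              ((n.primeFactors.filter (fun p : ℕ =>
                  (N : ℝ) ^ (((2 : ℝ) ^ (i + 1))⁻¹) ≤ (p : ℝ) ∧
                    (p : ℝ) ≤ (N : ℝ) ^ (((2 : ℝ) ^ i)⁻¹))).card : ℝ) ∧
            ∀ p : ℕ, p.Prime → (N : ℝ) ^ (((2 : ℝ) ^ (i + 1))⁻¹) ≤ (p : ℝ) →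
              (p : ℝ) ≤ (N : ℝ) ^ (((2 : ℝ) ^ i)⁻¹) → ¬(p ^ 2 ∣ n) :=
  erdos_trichotomy_general γ hγ0 hγ1 C₁

end DivisorCorr
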